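/- If T is a labeled D-tree accepted by a k-weak-pebble hesitant alternating tree automaton A, then A has an accepting homogeneous run on T, i.e., an accepting run r such that whenever two nodes of r carry the same configuration (q,x,ȳ), the multisets of configurations labeling their children coincide. -/

import Mathlib

/-- Trees / run trees: prefix-closed, sibling-downward-closed subsets of ℕ*. -/
def IsTree (T : Set (List ℕ)) : Prop :=
  [] ∈ T ∧ (∀ x : List ℕ, ∀ c : ℕ, x ++ [c] ∈ T → x ∈ T) ∧
    (∀ x : List ℕ, ∀ c c' : ℕ, x ++ [c] ∈ T → c' < c → x ++ [c'] ∈ T)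

/-- The branching degree of a node. -/
noncomputable def deg (T : Set (List ℕ)) (x : List ℕ) : ℕ :=
  {c : ℕ | x ++ [c] ∈ T}.ncard

inductive AClass where
  | existential | universal | transient
deriving DecidableEq

/-- Positive Boolean formulas. -/
inductive PosBool (X : Type) where
  | tt | ff
  | var (x : X)
  | and (a b : PosBool X)
  | or (a b : PosBool X)

def PosBool.Sat {X : Type} (v : X → Prop) : PosBool X → Prop
  | .tt => True
  | .ff => False
  | .var x => v x
  | .and a b => a.Sat v ∧ b.Sat v
  | .or a b => a.Sat v ∨ b.Sat v

def PosBool.vars {X : Type} : PosBool X → List X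
  | .tt => []
  | .ff => []
  | .var x => [x]
  | .and a b => a.vars ++ b.vars
  | .or a b => a.vars ++ b.vars

/-- All `P`-atoms of the formula are only disjunctively related. -/
def DisjOnly {X : Type} (P : X → Prop) : PosBool X → Prop
  | .tt => True
  | .ff => True
  | .var _ => True
  | .and a b => DisjOnly P a ∧ DisjOnly P b ∧
      ((∀ x ∈ a.vars, ¬ P x) ∨ (∀ x ∈ b.vars, ¬ P x))
  | .or a b => DisjOnly P a ∧ DisjOnly P b

/-- All `P`-atoms of the formula are only conjunctively related. -/
def ConjOnly {X : Type} (P : X → Prop) : PosBool X → Prop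
  | .tt => True
  | .ff => True
  | .var _ => True
  | .or a b => ConjOnly P a ∧ ConjOnly P b ∧
      ((∀ x ∈ a.vars, ¬ P x) ∨ (∀ x ∈ b.vars, ¬ P x))
  | .and a b => ConjOnly P a ∧ ConjOnly P b

/-- Moves of a (nonsymmetric) automaton: to the `c`-th child (`c ∈ D`,
0-indexed), to the parent (`-1`), stay (`0`), or the root test. -/
inductive NMove where
  | child (c : ℕ) | up | stay | root
deriving DecidableEq

/-- The possible values of the transition function. -/
inductive ATrans (Q : Type) where
  | drop (q : Q)
  | lift (q : Q)
  | form (φ : PosBool (NMove × Q))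

def ATrans.states {Q : Type} : ATrans Q → List Q
  | .drop q => [q]
  | .lift q => [q]
  | .form φ => φ.vars.map Prod.snd

/-- A `k`-weak-pebble hesitant alternating tree automaton (states `Q`,
alphabet `σ`, arities `D`), with partition `idx` into classes classified by
`cls`, and hesitant acceptance condition `⟨G,B⟩`. -/
structure WPHAA (Q σ : Type) (k : ℕ) where
  q0 : Q
  D : Set ℕ
  δ : Q → σ → ℕ → Bool → ATrans Q
  idx : Q → ℕ
  cls : ℕ → AClass
  G : Set Q
  B : Set Q

/-- Syntactic restrictions of Definition 2.1: no lift when the pebble is not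
here, no move to a child `≥ d`, no move up from the last pebble's position. -/
def WellFormed {Q σ : Type} {k : ℕ} (A : WPHAA Q σ k) : Prop :=
  (∀ q s d p, A.δ q s d false ≠ .lift p) ∧
  (∀ q s d b φ, A.δ q s d b = .form φ →
    ∀ mp ∈ φ.vars, ∀ c : ℕ, mp.1 = NMove.child c → c < d) ∧
  (∀ q s d φ, A.δ q s d true = .form φ → ∀ mp ∈ φ.vars, mp.1 ≠ NMove.up)

/-- The hesitancy conditions on the partition. -/
def Hesitant {Q σ : Type} {k : ℕ} (A : WPHAA Q σ k) : Prop :=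
  (∀ q s d b, ∀ p ∈ (A.δ q s d b).states, A.idx p ≤ A.idx q) ∧
  (∀ q s d b, A.cls (A.idx q) = .transient →
    ∀ p ∈ (A.δ q s d b).states, A.idx p ≠ A.idx q) ∧
  (∀ q s d b φ, A.cls (A.idx q) = .existential → A.δ q s d b = .form φ →
    DisjOnly (fun mp : NMove × Q => A.idx mp.2 = A.idx q) φ) ∧
  (∀ q s d b φ, A.cls (A.idx q) = .universal → A.δ q s d b = .form φ →
    ConjOnly (fun mp : NMove × Q => A.idx mp.2 = A.idx q) φ)

/-- `(T,V)` is a `D`-tree for `A`. -/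
def IsDTree {Q σ : Type} {k : ℕ} (A : WPHAA Q σ k) (T : Set (List ℕ)) : Prop :=
  IsTree T ∧ ∀ x ∈ T, {c : ℕ | x ++ [c] ∈ T}.Finite ∧ deg T x ∈ A.D

/-- A configuration: state, current node, stack of placed pebbles
(the last entry is the last placed pebble; `≤ k` of them). -/
structure Config (Q : Type) where
  st : Q
  pos : List ℕ
  peb : List (List ℕ)
deriving DecidableEq

def HasChild {Q : Type} (R : Set (List ℕ)) (ℓ : List ℕ → Config Q)
    (v : List ℕ) (c : Config Q) : Prop :=
  ∃ j : ℕ, v ++ [j] ∈ R ∧ ℓ (v ++ [j]) = c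

def MoveOK {Q : Type} (T R : Set (List ℕ)) (ℓ : List ℕ → Config Q)
    (v x : List ℕ) (peb : List (List ℕ)) : NMove × Q → Prop
  | (NMove.child c, p) => x ++ [c] ∈ T ∧ HasChild R ℓ v ⟨p, x ++ [c], peb⟩
  | (NMove.up, p) => x ≠ [] ∧ peb.getLast? ≠ some x ∧
      HasChild R ℓ v ⟨p, x.dropLast, peb⟩
  | (NMove.stay, p) => HasChild R ℓ v ⟨p, x, peb⟩
  | (NMove.root, p) => x = [] ∧ HasChild R ℓ v ⟨p, x, peb⟩

/-- The node `v` of the run is compatible with the transition function. -/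
def LocalOK {Q σ : Type} {k : ℕ} (A : WPHAA Q σ k) (T : Set (List ℕ))
    (V : List ℕ → σ) (R : Set (List ℕ)) (ℓ : List ℕ → Config Q)
    (v : List ℕ) : Prop :=
  (ℓ v).pos ∈ T ∧ (ℓ v).peb.length ≤ k ∧
    match A.δ (ℓ v).st (V (ℓ v).pos) (deg T (ℓ v).pos)
        (decide ((ℓ v).peb.getLast? = some (ℓ v).pos)) with
    | .drop p => (ℓ v).peb.length < k ∧
        HasChild R ℓ v ⟨p, (ℓ v).pos, (ℓ v).peb ++ [(ℓ v).pos]⟩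
    | .lift p => (ℓ v).peb.getLast? = some (ℓ v).pos ∧
        HasChild R ℓ v ⟨p, (ℓ v).pos, (ℓ v).peb.dropLast⟩
    | .form φ => ∃ Y : Set (NMove × Q), PosBool.Sat (· ∈ Y) φ ∧
        ∀ mp ∈ Y, MoveOK T R ℓ v (ℓ v).pos (ℓ v).peb mp

/-- A run of `A` on `(T,V)`: a tree `R` labeled by configurations via `ℓ`,
starting at the initial configuration and compatible with `δ`. -/
def IsRun {Q σ : Type} {k : ℕ} (A : WPHAA Q σ k) (T : Set (List ℕ))
    (V : List ℕ → σ) (R : Set (List ℕ)) (ℓ : List ℕ → Config Q) : Prop :=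
  IsTree R ∧ ℓ [] = ⟨A.q0, [], []⟩ ∧ ∀ v ∈ R, LocalOK A T V R ℓ v

def InfBranch (R : Set (List ℕ)) (b : ℕ → List ℕ) : Prop :=
  b 0 = [] ∧ ∀ n, b n ∈ R ∧ ∃ c : ℕ, b (n + 1) = b n ++ [c]

/-- The hesitant acceptance condition on an infinite sequence of states: the
path gets trapped in a class `i`; if `i` is existential it visits `G`
infinitely often, if `i` is universal it visits `B` only finitely often. -/
def AccBranch {Q σ : Type} {k : ℕ} (A : WPHAA Q σ k) (s : ℕ → Q) : Prop :=
  ∃ i N, (∀ n, N ≤ n → A.idx (s n) = i) ∧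
    ((A.cls i = .existential ∧ ∀ m, ∃ n, m ≤ n ∧ s n ∈ A.G) ∨
     (A.cls i = .universal ∧ ∃ m, ∀ n, m ≤ n → s n ∉ A.B))

/-- At `v`, a transition to the Boolean combination `true` applies. -/
def TrueApplies {Q σ : Type} {k : ℕ} (A : WPHAA Q σ k) (T : Set (List ℕ))
    (V : List ℕ → σ) (ℓ : List ℕ → Config Q) (v : List ℕ) : Prop :=
  match A.δ (ℓ v).st (V (ℓ v).pos) (deg T (ℓ v).pos)
      (decide ((ℓ v).peb.getLast? = some (ℓ v).pos)) with
  | .form φ => PosBool.Sat (fun _ => False) φ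
  | _ => False

/-- A run is accepting if every infinite path satisfies the acceptance
condition and every finite path ends where a `true`-transition applies. -/
def Accepting {Q σ : Type} {k : ℕ} (A : WPHAA Q σ k) (T : Set (List ℕ))
    (V : List ℕ → σ) (R : Set (List ℕ)) (ℓ : List ℕ → Config Q) : Prop :=
  (∀ b : ℕ → List ℕ, InfBranch R b → AccBranch A (fun n => (ℓ (b n)).st)) ∧
  (∀ v ∈ R, (∀ j : ℕ, v ++ [j] ∉ R) → TrueApplies A T V ℓ v)

/-- A run is homogeneous if any two run nodes carrying the same configuration
have the same multiset of configurations at their children (expressed by a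
label-preserving bijection between the children). -/
def Homogeneous {Q : Type} (R : Set (List ℕ)) (ℓ : List ℕ → Config Q) : Prop :=
  ∀ u ∈ R, ∀ v ∈ R, ℓ u = ℓ v →
    ∃ e : {c : ℕ // u ++ [c] ∈ R} ≃ {c : ℕ // v ++ [c] ∈ R},
      ∀ c : {c : ℕ // u ++ [c] ∈ R}, ℓ (v ++ [(e c).1]) = ℓ (u ++ [c.1])

/-!
Children of a node in a run may be chosen depending only on its configuration, provided the
choice is made at a representative node of minimal rank. Call `u` a bad descendant of `v` if the
path from `v` to `u` stays in the class of `v` and, for an existential class, avoids `G`, or, for a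
universal class, ends in `B`. Since every branch of the accepting run is accepting, this relation
is well-founded, and its ordinal rank drops along every `G`-free step of an existential class and
never grows in a universal class, dropping on entry into `B`.

Unfolding the run from the root, copying at each configuration the children of its minimal-rank
representative (restricted to the successors the transition permits), gives a homogeneous run.
Along each of its branches the class index stabilises by hesitancy, and the ranks of the
representatives satisfy the same inequalities, so well-foundedness of the ordinals forces the
acceptance condition.
-/

theorem PosBool.sat_mono {X : Type} {v w : X → Prop} (h : ∀ x, v x → w x) :
    ∀ φ : PosBool X, φ.Sat v → φ.Sat w
  | .tt, _ => trivial
  | .ff, hs => hs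
  | .var x, hs => h x hs
  | .and a b, hs => ⟨a.sat_mono h hs.1, b.sat_mono h hs.2⟩
  | .or a b, hs => hs.imp (a.sat_mono h) (b.sat_mono h)

theorem PosBool.sat_and_mem_vars {X : Type} {v : X → Prop} :
    ∀ φ : PosBool X, φ.Sat v → φ.Sat fun x => v x ∧ x ∈ φ.vars
  | .tt, _ => trivial
  | .ff, hs => hs
  | .var x, hs => ⟨hs, List.mem_singleton_self x⟩
  | .and a b, hs =>
      ⟨a.sat_mono (fun _ hx => ⟨hx.1, List.mem_append_left _ hx.2⟩) (a.sat_and_mem_vars hs.1),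
        b.sat_mono (fun _ hx => ⟨hx.1, List.mem_append_right _ hx.2⟩) (b.sat_and_mem_vars hs.2)⟩
  | .or a b, hs => hs.imp
      (fun hs => a.sat_mono (fun _ hx => ⟨hx.1, List.mem_append_left _ hx.2⟩)
        (a.sat_and_mem_vars hs))
      (fun hs => b.sat_mono (fun _ hx => ⟨hx.1, List.mem_append_right _ hx.2⟩)
        (b.sat_and_mem_vars hs))

theorem exists_forall_ge_eq_of_antitone_from {β : Type*} [PartialOrder β] [WellFoundedLT β]
    {f : ℕ → β} {N : ℕ} (h : ∀ n, N ≤ n → f (n + 1) ≤ f n) :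
    ∃ M, N ≤ M ∧ ∀ n, M ≤ n → f n = f M := by
  obtain ⟨m, hm⟩ := WellFoundedLT.antitone_chain_condition (f := fun n => f (N + n))
    (antitone_nat_of_succ_le fun n => h (N + n) (Nat.le_add_right N n))
  refine ⟨N + m, Nat.le_add_right N m, fun n hn => ?_⟩
  have := hm (n - N) (by omega)
  rwa [Nat.add_sub_cancel' (by omega : N ≤ n), eq_comm] at this

theorem exists_section_minimizing {ι α β : Type*} [Nonempty ι] [LinearOrder β] [WellFoundedLT β]
    (S : Set ι) (ℓ : ι → α) (g : ι → β) :
    ∃ rep : α → ι, ∀ i ∈ S, rep (ℓ i) ∈ S ∧ ℓ (rep (ℓ i)) = ℓ i ∧ g (rep (ℓ i)) ≤ g i := by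
  have h : ∀ a, ∃ r, ∀ i ∈ S, ℓ i = a → r ∈ S ∧ ℓ r = a ∧ g r ≤ g i := by
    intro a
    by_cases ha : ∃ i, i ∈ S ∧ ℓ i = a
    · obtain ⟨r, ⟨hrS, hra⟩, hmin⟩ := exists_minimalFor_of_wellFoundedLT _ g ha
      exact ⟨r, fun i hi hia => ⟨hrS, hra, (le_total (g r) (g i)).elim id (hmin ⟨hi, hia⟩)⟩⟩
    · exact ⟨Classical.arbitrary ι, fun i hi hia => absurd ⟨i, hi, hia⟩ ha⟩
  choose rep hrep using h
  exact ⟨rep, fun i hi => hrep _ i hi rfl⟩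

theorem IsWellFounded.rank_le_rank_of_forall {α : Type*} {r : α → α → Prop} [IsWellFounded α r]
    {a b : α} (h : ∀ c, r c a → r c b) : IsWellFounded.rank r a ≤ IsWellFounded.rank r b := by
  rw [IsWellFounded.rank_eq r a]
  exact Ordinal.iSup_le fun c => Order.succ_le_of_lt (IsWellFounded.rank_lt_of_rel (h c.1 c.2))

theorem IsTree.mem_of_prefix {R : Set (List ℕ)} (hR : IsTree R) {u p : List ℕ} (hu : u ∈ R)
    (hp : p <+: u) : p ∈ R := by
  induction u using List.reverseRecOn generalizing p with
  | nil => rwa [List.prefix_nil.1 hp]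
  | append_singleton u c ih =>
      rcases List.prefix_concat_iff.1 hp with rfl | hp
      · exact hu
      · exact ih (hR.2.1 u c hu) hp

section Paths

variable {P : List ℕ → Prop} {u v w : List ℕ}

def PathWithin (P : List ℕ → Prop) (v u : List ℕ) : Prop :=
  v.length < u.length ∧ v <+: u ∧ ∀ p, v <+: p → p <+: u → P p

theorem PathWithin.right (h : PathWithin P v u) : P u := h.2.2 u h.2.1 (List.prefix_refl u)

theorem PathWithin.trans (h₁ : PathWithin P v u) (h₂ : PathWithin P u w) : PathWithin P v w := by
  refine ⟨h₁.1.trans h₂.1, h₁.2.1.trans h₂.2.1, fun p hvp hpw => ?_⟩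
  rcases List.prefix_or_prefix_of_prefix hpw h₂.2.1 with hpu | hup
  · exact h₁.2.2 p hvp hpu
  · exact h₂.2.2 p hup hpw

theorem pathWithin_append_singleton {j : ℕ} (hv : P v) (hvj : P (v ++ [j])) :
    PathWithin P v (v ++ [j]) := by
  refine ⟨by simp, List.prefix_append v [j], fun p hvp hpv => ?_⟩
  rcases List.prefix_concat_iff.1 hpv with rfl | hpv
  · exact hvj
  · rwa [hvp.eq_of_length (le_antisymm hvp.length_le hpv.length_le)] at hv

theorem List.IsPrefix.take_eq_take_of_le {α : Type*} {p q : List α} (h : p <+: q) {n : ℕ}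
    (hn : n ≤ p.length) : p.take n = q.take n := by
  rw [List.prefix_iff_eq_take.1 h, List.take_take, min_eq_left (by simpa using hn)]

theorem exists_infBranch_of_pathWithin_chain {R : Set (List ℕ)} (hR : IsTree R)
    (hPR : ∀ p, P p → p ∈ R) (f : ℕ → List ℕ) (hf : ∀ n, PathWithin P (f n) (f (n + 1))) :
    ∃ b, InfBranch R b ∧ (∀ n, (f 0).length ≤ n → P (b n)) ∧
      ∀ m, m ≤ (f m).length ∧ b (f m).length = f m := by
  have hfrom0 : ∀ n, 0 < n → PathWithin P (f 0) (f n) := by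
    intro n hn
    induction n with
    | zero => exact absurd hn (lt_irrefl 0)
    | succ n ih =>
        rcases Nat.eq_zero_or_pos n with rfl | hpos
        · exact hf 0
        · exact (ih hpos).trans (hf n)
  have hP : ∀ n p, f 0 <+: p → p <+: f n → P p := fun n p h0 hn =>
    (hfrom0 (n + 1) n.succ_pos).2.2 p h0 (hn.trans (hf n).2.1)
  have hmono : ∀ m n, m ≤ n → f m <+: f n := by
    intro m n hmn
    induction n, hmn using Nat.le_induction with
    | base => exact List.prefix_refl _
    | succ n _ ih => exact ih.trans (hf n).2.1
  have hlen : ∀ n, n ≤ (f n).length := by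
    intro n
    induction n with
    | zero => exact Nat.zero_le _
    | succ n ih => exact Nat.succ_le_of_lt (ih.trans_lt (hf n).1)
  have hcoh : ∀ m n, n ≤ (f m).length → (f n).take n = (f m).take n := fun m n hn => by
    rw [(hmono n (max m n) (le_max_right m n)).take_eq_take_of_le (hlen n),
      (hmono m (max m n) (le_max_left m n)).take_eq_take_of_le hn]
  refine ⟨fun n => (f n).take n, ⟨List.take_zero, fun n => ⟨?_, ?_⟩⟩, fun n hn => ?_, fun m => ?_⟩
  · exact hR.mem_of_prefix (hPR _ (hP n _ (hmono 0 n (Nat.zero_le n)) (List.prefix_refl _)))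
      (List.take_prefix n (f n))
  · have hn : n < (f (n + 1)).length := (hlen n).trans_lt (hf n).1
    refine ⟨(f (n + 1))[n], ?_⟩
    show (f (n + 1)).take (n + 1) = (f n).take n ++ _
    rw [List.take_add_one, List.getElem?_eq_getElem hn, hcoh (n + 1) n hn.le]
    rfl
  · exact hP n _ (List.prefix_take_iff.2 ⟨hmono 0 n (Nat.zero_le n), hn⟩)
      (List.take_prefix n (f n))
  · refine ⟨hlen m, ?_⟩
    show (f _).take _ = f m
    rw [hcoh m _ le_rfl, List.take_length]

end Paths

section Unfold

variable {α : Type*} (L : α → List α) (a : α)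

def unfoldLabel (w : List ℕ) : α :=
  w.foldl (fun c j => (L c).getD j c) a

def unfoldTree : Set (List ℕ) :=
  {w | ∀ p j, p ++ [j] <+: w → j < (L (unfoldLabel L a p)).length}

variable {L a}

theorem nil_mem_unfoldTree : [] ∈ unfoldTree L a := fun p j h =>
  absurd (List.prefix_nil.1 h) (by simp)

theorem append_singleton_mem_unfoldTree {w : List ℕ} {j : ℕ} :
    w ++ [j] ∈ unfoldTree L a ↔ w ∈ unfoldTree L a ∧ j < (L (unfoldLabel L a w)).length := by
  constructor
  · intro h
    exact ⟨fun p i hp => h p i (hp.trans (List.prefix_append _ _)), h w j (List.prefix_refl _)⟩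
  · rintro ⟨hw, hj⟩ p i hp
    rcases List.prefix_concat_iff.1 hp with heq | hp
    · obtain ⟨rfl, hij⟩ := List.append_inj' heq rfl
      rwa [List.singleton_inj.1 hij]
    · exact hw p i hp

theorem unfoldLabel_append_singleton {w : List ℕ} {j : ℕ}
    (hj : j < (L (unfoldLabel L a w)).length) :
    unfoldLabel L a (w ++ [j]) = (L (unfoldLabel L a w))[j] := by
  rw [unfoldLabel, List.foldl_append]
  exact List.getD_eq_getElem _ _ hj

theorem isTree_unfoldTree : IsTree (unfoldTree L a) := by
  refine ⟨nil_mem_unfoldTree, fun w j h => (append_singleton_mem_unfoldTree.1 h).1,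
    fun w j j' h hj' => ?_⟩
  obtain ⟨hw, hj⟩ := append_singleton_mem_unfoldTree.1 h
  exact append_singleton_mem_unfoldTree.2 ⟨hw, hj'.trans hj⟩

theorem unfoldLabel_induction {S : α → Prop} (ha : S a) (hL : ∀ c, S c → ∀ c' ∈ L c, S c') :
    ∀ w ∈ unfoldTree L a, S (unfoldLabel L a w) := by
  intro w
  induction w using List.reverseRecOn with
  | nil => exact fun _ => ha
  | append_singleton w j ih =>
      intro h
      obtain ⟨hw, hj⟩ := append_singleton_mem_unfoldTree.1 h
      rw [unfoldLabel_append_singleton hj]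
      exact hL _ (ih hw) _ (List.getElem_mem hj)

theorem InfBranch.unfoldLabel_succ_mem {b : ℕ → List ℕ} (hb : InfBranch (unfoldTree L a) b)
    (n : ℕ) : unfoldLabel L a (b (n + 1)) ∈ L (unfoldLabel L a (b n)) := by
  obtain ⟨-, j, hj⟩ := hb.2 n
  have hj' := (append_singleton_mem_unfoldTree.1 (hj ▸ (hb.2 (n + 1)).1)).2
  rw [hj, unfoldLabel_append_singleton hj']
  exact List.getElem_mem hj'

end Unfold

section UnfoldConfig

variable {Q : Type} {L : Config Q → List (Config Q)} {a : Config Q}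

theorem hasChild_unfoldTree {w : List ℕ} (hw : w ∈ unfoldTree L a) {c : Config Q} :
    HasChild (unfoldTree L a) (unfoldLabel L a) w c ↔ c ∈ L (unfoldLabel L a w) := by
  constructor
  · rintro ⟨j, hj, rfl⟩
    have hj' := (append_singleton_mem_unfoldTree.1 hj).2
    rw [unfoldLabel_append_singleton hj']
    exact List.getElem_mem hj'
  · intro hc
    obtain ⟨j, hj, rfl⟩ := List.getElem_of_mem hc
    exact ⟨j, append_singleton_mem_unfoldTree.2 ⟨hw, hj⟩, unfoldLabel_append_singleton hj⟩

theorem homogeneous_unfoldTree : Homogeneous (unfoldTree L a) (unfoldLabel L a) := by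
  intro u hu v hv huv
  have hch : ∀ j, u ++ [j] ∈ unfoldTree L a ↔ v ++ [j] ∈ unfoldTree L a := fun j => by
    rw [append_singleton_mem_unfoldTree, append_singleton_mem_unfoldTree, huv]
    exact and_congr_left fun _ => iff_of_true hu hv
  refine ⟨Equiv.subtypeEquiv (Equiv.refl ℕ) hch, fun ⟨j, hj⟩ => ?_⟩
  have hj' := (append_singleton_mem_unfoldTree.1 hj).2
  have hj'' : j < (L (unfoldLabel L a v)).length := huv ▸ hj'
  show unfoldLabel L a (v ++ [j]) = unfoldLabel L a (u ++ [j])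
  rw [unfoldLabel_append_singleton hj', unfoldLabel_append_singleton hj'']
  simp only [huv]

end UnfoldConfig

section LocalRun

variable {Q σ : Type} {k : ℕ} (A : WPHAA Q σ k) (T : Set (List ℕ)) (V : List ℕ → σ)

noncomputable def transAt (c : Config Q) : ATrans Q :=
  A.δ c.st (V c.pos) (deg T c.pos) (decide (c.peb.getLast? = some c.pos))

def moveTarget (c : Config Q) : NMove × Q → Config Q
  | (.child j, p) => ⟨p, c.pos ++ [j], c.peb⟩
  | (.up, p) => ⟨p, c.pos.dropLast, c.peb⟩
  | (.stay, p) => ⟨p, c.pos, c.peb⟩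
  | (.root, p) => ⟨p, c.pos, c.peb⟩

noncomputable def succConfigs (c : Config Q) : List (Config Q) :=
  match transAt A T V c with
  | .drop p => [⟨p, c.pos, c.peb ++ [c.pos]⟩]
  | .lift p => [⟨p, c.pos, c.peb.dropLast⟩]
  | .form φ => φ.vars.map (moveTarget c)

variable {A T V}

theorem moveTarget_st (c : Config Q) (mp : NMove × Q) : (moveTarget c mp).st = mp.2 := by
  obtain ⟨m, p⟩ := mp
  cases m <;> rfl

theorem st_mem_states_of_mem_succConfigs {c c' : Config Q} (h : c' ∈ succConfigs A T V c) :
    c'.st ∈ (transAt A T V c).states := by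
  unfold succConfigs at h
  split at h <;> rename_i htr <;> rw [htr, ATrans.states]
  · rw [List.mem_singleton.1 h, List.mem_singleton]
  · rw [List.mem_singleton.1 h, List.mem_singleton]
  · obtain ⟨mp, hmp, rfl⟩ := List.mem_map.1 h
    exact List.mem_map.2 ⟨mp, hmp, (moveTarget_st c mp).symm⟩

variable {R R' : Set (List ℕ)} {ℓ ℓ' : List ℕ → Config Q} {u v : List ℕ}

theorem MoveOK.hasChild {c : Config Q} {mp : NMove × Q} (h : MoveOK T R ℓ v c.pos c.peb mp) :
    HasChild R ℓ v (moveTarget c mp) := by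
  obtain ⟨m, p⟩ := mp
  cases m with
  | child j => exact h.2
  | up => exact h.2.2
  | stay => exact h
  | root => exact h.2

theorem MoveOK.of_hasChild {c : Config Q} {mp : NMove × Q} (h : MoveOK T R ℓ v c.pos c.peb mp)
    (hch : HasChild R' ℓ' u (moveTarget c mp)) : MoveOK T R' ℓ' u c.pos c.peb mp := by
  obtain ⟨m, p⟩ := mp
  cases m with
  | child j => exact ⟨h.1, hch⟩
  | up => exact ⟨h.1, h.2.1, hch⟩
  | stay => exact hch
  | root => exact ⟨h.1, hch⟩

theorem LocalOK.of_hasChild (h : LocalOK A T V R ℓ v) (hℓ : ℓ' u = ℓ v)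
    (hch : ∀ c ∈ succConfigs A T V (ℓ v), HasChild R ℓ v c → HasChild R' ℓ' u c) :
    LocalOK A T V R' ℓ' u := by
  obtain ⟨hpos, hk, h⟩ := h
  refine ⟨hℓ ▸ hpos, hℓ ▸ hk, ?_⟩
  rw [hℓ]
  unfold succConfigs transAt at hch
  split at h <;> rename_i htr <;> simp only [htr] at hch ⊢
  · exact ⟨h.1, hch _ (List.mem_singleton_self _) h.2⟩
  · exact ⟨h.1, hch _ (List.mem_singleton_self _) h.2⟩
  · -- only the atoms of `φ` need children, and their targets are successor configurations
    obtain ⟨Y, hsat, hY⟩ := h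
    exact ⟨{mp | mp ∈ Y ∧ mp ∈ _}, PosBool.sat_and_mem_vars _ hsat, fun mp hmp =>
      (hY mp hmp.1).of_hasChild (hch _ (List.mem_map_of_mem hmp.2) (hY mp hmp.1).hasChild)⟩

theorem LocalOK.trueApplies (h : LocalOK A T V R ℓ v) (hleaf : ∀ j, v ++ [j] ∉ R) :
    TrueApplies A T V ℓ v := by
  have hnone : ∀ c, ¬ HasChild R ℓ v c := fun c ⟨j, hj, _⟩ => hleaf j hj
  obtain ⟨-, -, h⟩ := h
  unfold TrueApplies
  split at h <;> rename_i htr <;> simp only [htr]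
  · exact hnone _ h.2
  · exact hnone _ h.2
  · obtain ⟨Y, hsat, hY⟩ := h
    exact PosBool.sat_mono (fun mp hmp => hnone _ (hY mp hmp).hasChild) _ hsat

end LocalRun

section Acceptance

variable {Q σ : Type} {k : ℕ} {A : WPHAA Q σ k}

theorem AccBranch.of_forall_ge_idx_eq {s : ℕ → Q} (h : AccBranch A s) {i N : ℕ}
    (hN : ∀ n, N ≤ n → A.idx (s n) = i) :
    (A.cls i = .existential ∧ ∀ m, ∃ n, m ≤ n ∧ s n ∈ A.G) ∨
      (A.cls i = .universal ∧ ∃ m, ∀ n, m ≤ n → s n ∉ A.B) := by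
  obtain ⟨i', N', hN', hacc⟩ := h
  rwa [← hN' (max N N') (le_max_right N N'), hN (max N N') (le_max_left N N')] at hacc

variable (A) in
def HesitantStep (q q' : Q) : Prop :=
  A.idx q' ≤ A.idx q ∧ (A.cls (A.idx q) = .transient → A.idx q' ≠ A.idx q)

variable (A) in
def ProgressStep {β : Type*} [Preorder β] (q q' : Q) (r r' : β) : Prop :=
  A.idx q' = A.idx q →
    (A.cls (A.idx q) = .existential → q ∉ A.G → q' ∉ A.G → r' < r) ∧
      (A.cls (A.idx q) = .universal → r' ≤ r ∧ (q' ∈ A.B → r' < r))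

theorem ProgressStep.of_le {β : Type*} [Preorder β] {q q' : Q} {r r' r'' : β}
    (h : ProgressStep A q q' r r'') (hle : r' ≤ r'') : ProgressStep A q q' r r' := fun hi =>
  ⟨fun he hq hq' => hle.trans_lt ((h hi).1 he hq hq'),
    fun hu => ⟨hle.trans ((h hi).2 hu).1, fun hB => hle.trans_lt (((h hi).2 hu).2 hB)⟩⟩

theorem accBranch_of_progressStep {β : Type*} [PartialOrder β] [WellFoundedLT β]
    (s : ℕ → Q) (r : ℕ → β)
    (h : ∀ n, HesitantStep A (s n) (s (n + 1)) ∧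
      ProgressStep A (s n) (s (n + 1)) (r n) (r (n + 1))) :
    AccBranch A s := by
  obtain ⟨N, -, hN⟩ := exists_forall_ge_eq_of_antitone_from (f := fun n => A.idx (s n))
    (N := 0) fun n _ => (h n).1.1
  have hstay : ∀ n, N ≤ n → A.idx (s (n + 1)) = A.idx (s n) := fun n hn =>
    (hN (n + 1) (hn.trans n.le_succ)).trans (hN n hn).symm
  have hprog : ∀ n, N ≤ n → _ := fun n hn => (h n).2 (hstay n hn)
  refine ⟨A.idx (s N), N, hN, ?_⟩
  cases hcls : A.cls (A.idx (s N)) with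
  | transient => exact absurd (hstay N le_rfl) ((h N).1.2 hcls)
  | existential =>
      refine Or.inl ⟨rfl, fun m => ?_⟩
      by_contra! hG
      have hdec : ∀ n, max m N ≤ n → r (n + 1) < r n := fun n hn =>
        (hprog n (le_of_max_le_right hn)).1 (by rw [hN n (le_of_max_le_right hn), hcls])
          (hG n (le_of_max_le_left hn)) (hG (n + 1) (le_of_max_le_left (hn.trans n.le_succ)))
      obtain ⟨M, hM, hconst⟩ := exists_forall_ge_eq_of_antitone_from fun n hn => (hdec n hn).le
      exact (hdec M hM).ne (hconst (M + 1) M.le_succ)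
  | universal =>
      have huniv : ∀ n, N ≤ n → A.cls (A.idx (s n)) = .universal := fun n hn => by
        rw [hN n hn, hcls]
      obtain ⟨M, hM, hconst⟩ := exists_forall_ge_eq_of_antitone_from (f := r)
        fun n hn => ((hprog n hn).2 (huniv n hn)).1
      refine Or.inr ⟨rfl, M + 1, fun n hn hB => ?_⟩
      obtain ⟨n, rfl⟩ : ∃ n', n = n' + 1 := ⟨n - 1, by omega⟩
      have hlt := ((hprog n (by omega)).2 (huniv n (by omega))).2 hB
      rw [hconst n (by omega), hconst (n + 1) (by omega)] at hlt
      exact lt_irrefl _ hlt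

end Acceptance

section BadDescent

variable {Q σ : Type} {k : ℕ} (A : WPHAA Q σ k) (R : Set (List ℕ)) (ℓ : List ℕ → Config Q)

def BadDescent (u v : List ℕ) : Prop :=
  (A.cls (A.idx (ℓ v).st) = .existential ∧
    PathWithin (fun p => p ∈ R ∧ A.idx (ℓ p).st = A.idx (ℓ v).st ∧ (ℓ p).st ∉ A.G) v u) ∨
  (A.cls (A.idx (ℓ v).st) = .universal ∧
    PathWithin (fun p => p ∈ R ∧ A.idx (ℓ p).st = A.idx (ℓ v).st) v u ∧ (ℓ u).st ∈ A.B)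

variable {A R ℓ}

theorem BadDescent.idx_eq {u v : List ℕ} (h : BadDescent A R ℓ u v) :
    A.idx (ℓ u).st = A.idx (ℓ v).st := by
  rcases h with ⟨-, h⟩ | ⟨-, h, -⟩
  exacts [h.right.2.1, h.right.2]

theorem wellFounded_badDescent (hR : IsTree R)
    (hacc : ∀ b, InfBranch R b → AccBranch A fun n => (ℓ (b n)).st) :
    WellFounded (BadDescent A R ℓ) := by
  refine wellFounded_iff_isEmpty_descending_chain.2 ⟨fun ⟨f, hf⟩ => ?_⟩
  have hidx : ∀ n, A.idx (ℓ (f n)).st = A.idx (ℓ (f 0)).st := by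
    intro n
    induction n with
    | zero => rfl
    | succ n ih => exact (hf n).idx_eq.trans ih
  rcases hf 0 with ⟨hex, -⟩ | ⟨huniv, -⟩
  · have hpath : ∀ n, PathWithin (fun p => p ∈ R ∧ A.idx (ℓ p).st = A.idx (ℓ (f 0)).st ∧
        (ℓ p).st ∉ A.G) (f n) (f (n + 1)) := fun n => by
      rcases hf n with ⟨-, h⟩ | ⟨hu, -⟩
      · rwa [hidx n] at h
      · rw [hidx n, hex] at hu; cases hu
    obtain ⟨b, hb, hbP, -⟩ := exists_infBranch_of_pathWithin_chain hR (fun p hp => hp.1) f hpath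
    rcases (hacc b hb).of_forall_ge_idx_eq fun n hn => (hbP n hn).2.1 with ⟨-, hG⟩ | ⟨hu, -⟩
    · obtain ⟨n, hn, hGn⟩ := hG (f 0).length
      exact (hbP n hn).2.2 hGn
    · rw [hex] at hu; cases hu
  · have hpath : ∀ n, PathWithin (fun p => p ∈ R ∧ A.idx (ℓ p).st = A.idx (ℓ (f 0)).st)
        (f n) (f (n + 1)) ∧ (ℓ (f (n + 1))).st ∈ A.B := fun n => by
      rcases hf n with ⟨he, -⟩ | ⟨-, h, hB⟩
      · rw [hidx n, huniv] at he; cases he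
      · rw [hidx n] at h; exact ⟨h, hB⟩
    obtain ⟨b, hb, hbP, hbf⟩ :=
      exists_infBranch_of_pathWithin_chain hR (fun p hp => hp.1) f fun n => (hpath n).1
    rcases (hacc b hb).of_forall_ge_idx_eq fun n hn => (hbP n hn).2 with ⟨he, -⟩ | ⟨-, m, hB⟩
    · rw [huniv] at he; cases he
    · obtain ⟨hlen, hbm⟩ := hbf (m + 1)
      have hBm := (hpath m).2
      rw [← hbm] at hBm
      exact hB _ (m.le_succ.trans hlen) hBm

theorem exists_progressStep_of_forall_accBranch (hR : IsTree R)
    (hacc : ∀ b, InfBranch R b → AccBranch A fun n => (ℓ (b n)).st) :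
    ∃ μ : List ℕ → Ordinal.{0}, ∀ v ∈ R, ∀ j, v ++ [j] ∈ R →
      ProgressStep A (ℓ v).st (ℓ (v ++ [j])).st (μ v) (μ (v ++ [j])) := by
  have : IsWellFounded _ (BadDescent A R ℓ) := ⟨wellFounded_badDescent hR hacc⟩
  refine ⟨IsWellFounded.rank (BadDescent A R ℓ), fun v hv j hvj hidx => ⟨?_, fun huniv => ?_⟩⟩
  · intro hex hG hG'
    exact IsWellFounded.rank_lt_of_rel
      (Or.inl ⟨hex, pathWithin_append_singleton ⟨hv, rfl, hG⟩ ⟨hvj, hidx, hG'⟩⟩)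
  have hstep : PathWithin (fun p => p ∈ R ∧ A.idx (ℓ p).st = A.idx (ℓ v).st) v (v ++ [j]) :=
    pathWithin_append_singleton ⟨hv, rfl⟩ ⟨hvj, hidx⟩
  refine ⟨IsWellFounded.rank_le_rank_of_forall fun w hw => Or.inr ?_,
    fun hB => IsWellFounded.rank_lt_of_rel (Or.inr ⟨huniv, hstep, hB⟩)⟩
  unfold BadDescent at hw
  rw [hidx] at hw
  rcases hw with ⟨he, -⟩ | ⟨-, hpath, hB⟩
  · rw [huniv] at he; cases he
  · exact ⟨huniv, hstep.trans hpath, hB⟩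

end BadDescent

section HomogeneousRun

variable {Q σ : Type} {k : ℕ} (A : WPHAA Q σ k) (T : Set (List ℕ)) (V : List ℕ → σ)
  (R : Set (List ℕ)) (ℓ : List ℕ → Config Q) (rep : Config Q → List ℕ)

noncomputable def repSuccs (c : Config Q) : List (Config Q) :=
  open Classical in (succConfigs A T V c).filter fun c' => HasChild R ℓ (rep c) c'

variable {A T V R ℓ rep}

theorem mem_repSuccs {c c' : Config Q} :
    c' ∈ repSuccs A T V R ℓ rep c ↔ c' ∈ succConfigs A T V c ∧ HasChild R ℓ (rep c) c' := by
  simp [repSuccs]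

theorem exists_eq_unfoldLabel_repSuccs (h0 : [] ∈ R) :
    ∀ w ∈ unfoldTree (repSuccs A T V R ℓ rep) (ℓ []),
      ∃ v ∈ R, ℓ v = unfoldLabel (repSuccs A T V R ℓ rep) (ℓ []) w := by
  refine unfoldLabel_induction (S := fun c => ∃ v ∈ R, ℓ v = c) ⟨[], h0, rfl⟩ fun c _ c' hc' => ?_
  obtain ⟨-, j, hj, hjc'⟩ := mem_repSuccs.1 hc'
  exact ⟨_, hj, hjc'⟩

theorem isRun_unfold_repSuccs (hRun : IsRun A T V R ℓ)
    (hrep : ∀ v ∈ R, rep (ℓ v) ∈ R ∧ ℓ (rep (ℓ v)) = ℓ v) :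
    IsRun A T V (unfoldTree (repSuccs A T V R ℓ rep) (ℓ []))
      (unfoldLabel (repSuccs A T V R ℓ rep) (ℓ [])) := by
  refine ⟨isTree_unfoldTree, hRun.2.1, fun w hw => ?_⟩
  obtain ⟨v, hv, hvw⟩ := exists_eq_unfoldLabel_repSuccs hRun.1.1 w hw
  obtain ⟨hrepR, hrepℓ⟩ := hrep v hv
  rw [hvw] at hrepR hrepℓ
  refine (hRun.2.2 _ hrepR).of_hasChild hrepℓ.symm fun c hc hch => ?_
  rw [hrepℓ] at hc
  exact (hasChild_unfoldTree hw).2 (mem_repSuccs.2 ⟨hc, hch⟩)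

theorem progressStep_of_mem_repSuccs {β : Type*} [Preorder β] {μ : List ℕ → β}
    (hμ : ∀ v ∈ R, ∀ j, v ++ [j] ∈ R →
      ProgressStep A (ℓ v).st (ℓ (v ++ [j])).st (μ v) (μ (v ++ [j])))
    (hrep : ∀ v ∈ R, rep (ℓ v) ∈ R ∧ ℓ (rep (ℓ v)) = ℓ v ∧ μ (rep (ℓ v)) ≤ μ v)
    {c c' : Config Q} (hc : ∃ v ∈ R, ℓ v = c) (hc' : c' ∈ repSuccs A T V R ℓ rep c) :
    ProgressStep A c.st c'.st (μ (rep c)) (μ (rep c')) := by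
  obtain ⟨v, hv, rfl⟩ := hc
  obtain ⟨-, j, hj, rfl⟩ := mem_repSuccs.1 hc'
  obtain ⟨hrepR, hrepℓ, -⟩ := hrep v hv
  have hstep := hμ _ hrepR j hj
  rw [hrepℓ] at hstep
  exact hstep.of_le (hrep _ hj).2.2

end HomogeneousRun

theorem Hesitant.hesitantStep {Q σ : Type} {k : ℕ} {A : WPHAA Q σ k} (hhes : Hesitant A)
    {T : Set (List ℕ)} {V : List ℕ → σ} {c c' : Config Q} (h : c' ∈ succConfigs A T V c) :
    HesitantStep A c.st c'.st :=
  ⟨hhes.1 _ _ _ _ _ (st_mem_states_of_mem_succConfigs h),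
    fun ht => hhes.2.1 _ _ _ _ ht _ (st_mem_states_of_mem_succConfigs h)⟩

theorem stmt8_general {Q σ : Type} {k : ℕ} (A : WPHAA Q σ k)
    (hhes : Hesitant A)
    (T : Set (List ℕ)) (V : List ℕ → σ)
    (hacc : ∃ R ℓ, IsRun A T V R ℓ ∧ Accepting A T V R ℓ) :
    ∃ R ℓ, IsRun A T V R ℓ ∧ Accepting A T V R ℓ ∧ Homogeneous R ℓ := by
  obtain ⟨R, ℓ, hRun, hAcc⟩ := hacc
  obtain ⟨μ, hμ⟩ := exists_progressStep_of_forall_accBranch hRun.1 hAcc.1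
  obtain ⟨rep, hrep⟩ := exists_section_minimizing R ℓ μ
  set L := repSuccs A T V R ℓ rep
  have hNew : IsRun A T V (unfoldTree L (ℓ [])) (unfoldLabel L (ℓ [])) :=
    isRun_unfold_repSuccs hRun fun v hv => ⟨(hrep v hv).1, (hrep v hv).2.1⟩
  refine ⟨_, _, hNew, ⟨fun b hb => ?_, fun w hw hleaf => (hNew.2.2 w hw).trueApplies hleaf⟩,
    homogeneous_unfoldTree⟩
  refine accBranch_of_progressStep _ (fun n => μ (rep (unfoldLabel L (ℓ []) (b n)))) fun n => ?_
  have hsucc := hb.unfoldLabel_succ_mem n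
  exact ⟨hhes.hesitantStep (mem_repSuccs.1 hsucc).1, progressStep_of_mem_repSuccs hμ hrep
    (exists_eq_unfoldLabel_repSuccs hRun.1.1 _ (hb.2 n).1) hsucc⟩

/-- if a labeled `D`-tree `(T,V)` is accepted by a k-weak-pebble
hesitant alternating tree automaton `A`, then `A` has an accepting
homogeneous run on `(T,V)`. -/
theorem stmt8 {Q σ : Type} {k : ℕ} (A : WPHAA Q σ k)
    (hwf : WellFormed A) (hhes : Hesitant A)
    (T : Set (List ℕ)) (V : List ℕ → σ) (hT : IsDTree A T)
    (hacc : ∃ R ℓ, IsRun A T V R ℓ ∧ Accepting A T V R ℓ) :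
    ∃ R ℓ, IsRun A T V R ℓ ∧ Accepting A T V R ℓ ∧ Homogeneous R ℓ :=
  stmt8_general A hhes T V hacc
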